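/- arXiv:1209.2138 — 2 statements merged into one kernel-verified Lean document; each statement's English description precedes it below -/
import Mathlib

section
/- Rank-one optimality for single-quadratic-objective SDPs: consider maximizing aᴴ X a over Hermitian X ⪰ 0 subject to finitely many constraints tr(B_i X) ≤ b_i (i = 1,…,M) with B_i ⪰ 0 Hermitian and b_i ≥ 0, where a ∈ ℂⁿ. If the problem has an optimal solution, then it has an optimal solution X* with rank(X*) ≤ 1. -/
/-! Let `X` be optimal and `t = aᴴ X a`. The rank-one matrix `X' = X a aᴴ X / t` has the same
objective value `|aᴴ X a|² / t = t`, and `X' ≤ X` in the Loewner order: for every `y`,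
`|yᴴ X a|² ≤ (yᴴ X y) t` is Cauchy–Schwarz for the semi-inner product `(x, y) ↦ xᴴ X y`.
Since `tr (B ·)` is monotone for `B ⪰ 0`, `X'` satisfies every constraint that `X` does. -/

open Matrix
open scoped ComplexOrder

namespace Matrix

open scoped MatrixOrder

variable {n 𝕜 : Type*} [Fintype n] [RCLike 𝕜]

theorem PosSemidef.trace_mul_nonneg {A B : Matrix n n 𝕜} (hA : A.PosSemidef)
    (hB : B.PosSemidef) : 0 ≤ (A * B).trace := by
  classical
  obtain ⟨C, rfl⟩ := CStarAlgebra.nonneg_iff_eq_star_mul_self.mp hA.nonneg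
  rw [star_eq_conjTranspose, Matrix.mul_assoc, trace_mul_comm]
  exact (hB.mul_mul_conjTranspose_same C).trace_nonneg

theorem PosSemidef.trace_mul_le_trace_mul {A A' B : Matrix n n 𝕜} (hB : B.PosSemidef)
    (h : A ≤ A') : (B * A).trace ≤ (B * A').trace := by
  rw [← sub_nonneg, ← trace_sub, ← Matrix.mul_sub]
  exact hB.trace_mul_nonneg h

theorem PosSemidef.norm_dotProduct_mulVec_sq_le {X : Matrix n n 𝕜} (hX : X.PosSemidef)
    (x y : n → 𝕜) :
    ‖star x ⬝ᵥ (X *ᵥ y)‖ ^ 2 ≤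
      RCLike.re (star x ⬝ᵥ (X *ᵥ x)) * RCLike.re (star y ⬝ᵥ (X *ᵥ y)) := by
  let := X.toSeminormedAddCommGroup hX
  let := X.toInnerProductSpace hX
  have h := inner_mul_inner_self_le (𝕜 := 𝕜) x y
  rw [norm_inner_symm y x, ← sq] at h
  rw [dotProduct_comm (star x), dotProduct_comm (star x), dotProduct_comm (star y)]
  exact h

theorem PosSemidef.vecMulVec_mulVec_le_smul {X : Matrix n n 𝕜} (hX : X.PosSemidef)
    (a : n → 𝕜) : vecMulVec (X *ᵥ a) (star (X *ᵥ a)) ≤ (star a ⬝ᵥ (X *ᵥ a)) • X := by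
  have ht := hX.dotProduct_mulVec_nonneg a
  refine .of_dotProduct_mulVec_nonneg
    ((hX.smul ht).isHermitian.sub (posSemidef_vecMulVec_self_star _).isHermitian) fun y => ?_
  have hq := hX.dotProduct_mulVec_nonneg y
  have quadratic_form :
      star y ⬝ᵥ ((star a ⬝ᵥ (X *ᵥ a)) • X - vecMulVec (X *ᵥ a) (star (X *ᵥ a))) *ᵥ y =
        (star a ⬝ᵥ (X *ᵥ a)) * (star y ⬝ᵥ (X *ᵥ y)) - ‖star y ⬝ᵥ (X *ᵥ a)‖ ^ 2 := by
    rw [sub_mulVec, smul_mulVec, vecMulVec_mulVec, dotProduct_sub, dotProduct_smul,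
      star_dotProduct (X *ᵥ a)]
    simp [RCLike.conj_mul]
  rw [quadratic_form, ← RCLike.conj_eq_iff_re.mp (IsSelfAdjoint.of_nonneg ht),
    ← RCLike.conj_eq_iff_re.mp (IsSelfAdjoint.of_nonneg hq)]
  norm_cast
  exact sub_nonneg.mpr ((hX.norm_dotProduct_mulVec_sq_le y a).trans_eq (mul_comm _ _))

/-- When `aᴴ X a = 0` this is `0`, since `0⁻¹ = 0`. -/
noncomputable def rankOneCompression (X : Matrix n n 𝕜) (a : n → 𝕜) : Matrix n n 𝕜 :=
  (star a ⬝ᵥ (X *ᵥ a))⁻¹ • vecMulVec (X *ᵥ a) (star (X *ᵥ a))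

theorem rank_rankOneCompression_le (X : Matrix n n 𝕜) (a : n → 𝕜) :
    (X.rankOneCompression a).rank ≤ 1 := by
  rw [rankOneCompression, ← smul_vecMulVec]
  exact rank_vecMulVec_le _ _

theorem PosSemidef.rankOneCompression {X : Matrix n n 𝕜} (hX : X.PosSemidef) (a : n → 𝕜) :
    (X.rankOneCompression a).PosSemidef :=
  (posSemidef_vecMulVec_self_star _).smul (inv_nonneg.mpr (hX.dotProduct_mulVec_nonneg a))

theorem PosSemidef.rankOneCompression_le {X : Matrix n n 𝕜} (hX : X.PosSemidef) (a : n → 𝕜) :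
    X.rankOneCompression a ≤ X := by
  obtain h0 | hne := eq_or_ne (star a ⬝ᵥ (X *ᵥ a)) 0
  · simpa [Matrix.rankOneCompression, h0] using hX.nonneg
  · have h : X - X.rankOneCompression a = (star a ⬝ᵥ (X *ᵥ a))⁻¹ •
        ((star a ⬝ᵥ (X *ᵥ a)) • X - vecMulVec (X *ᵥ a) (star (X *ᵥ a))) := by
      rw [smul_sub, inv_smul_smul₀ hne, Matrix.rankOneCompression]
    rw [Matrix.le_iff, h]
    exact (hX.vecMulVec_mulVec_le_smul a).smul (inv_nonneg.mpr (hX.dotProduct_mulVec_nonneg a))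

theorem IsHermitian.dotProduct_rankOneCompression_mulVec {X : Matrix n n 𝕜}
    (hX : X.IsHermitian) (a : n → 𝕜) :
    star a ⬝ᵥ (X.rankOneCompression a *ᵥ a) = star a ⬝ᵥ (X *ᵥ a) := by
  have hself : star (star a ⬝ᵥ (X *ᵥ a)) = star a ⬝ᵥ (X *ᵥ a) := by
    rw [← star_dotProduct, star_mulVec, ← dotProduct_mulVec, hX.eq]
  rw [Matrix.rankOneCompression, smul_mulVec, vecMulVec_mulVec, star_dotProduct (X *ᵥ a), hself,
    op_smul_eq_smul, dotProduct_smul, dotProduct_smul, smul_eq_mul, smul_eq_mul, ← mul_assoc,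
    inv_mul_mul_self]

end Matrix

theorem rank_one_optimal_sdp_general {n M : ℕ} (a : Fin n → ℂ)
    (B : Fin M → Matrix (Fin n) (Fin n) ℂ) (b : Fin M → ℝ)
    (hB : ∀ i, (B i).PosSemidef)
    (feasible : Matrix (Fin n) (Fin n) ℂ → Prop)
    (hfeas : ∀ X, feasible X ↔ X.PosSemidef ∧ ∀ i, (Matrix.trace (B i * X)).re ≤ b i)
    (hopt : ∃ X, feasible X ∧ ∀ Y, feasible Y →
      (star a ⬝ᵥ (Y *ᵥ a)).re ≤ (star a ⬝ᵥ (X *ᵥ a)).re) :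
    ∃ X, feasible X ∧ (∀ Y, feasible Y →
      (star a ⬝ᵥ (Y *ᵥ a)).re ≤ (star a ⬝ᵥ (X *ᵥ a)).re) ∧ X.rank ≤ 1 := by
  obtain ⟨X, hXfeas, hXopt⟩ := hopt
  obtain ⟨hX, hXB⟩ := (hfeas X).mp hXfeas
  refine ⟨X.rankOneCompression a, (hfeas _).mpr ⟨hX.rankOneCompression a, fun i => ?_⟩,
    fun Y hY => ?_, X.rank_rankOneCompression_le a⟩
  · exact (RCLike.re_le_re ((hB i).trace_mul_le_trace_mul (hX.rankOneCompression_le a))).trans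
      (hXB i)
  · rw [hX.isHermitian.dotProduct_rankOneCompression_mulVec a]
    exact hXopt Y hY

/-- Rank-one optimality for single-quadratic-objective SDPs: if maximizing `aᴴ X a` over
PSD `X` subject to `tr(B_i X) ≤ b_i` (with `B_i ⪰ 0`, `b_i ≥ 0`) admits an optimal
solution, then it admits an optimal solution of rank at most one. -/
theorem rank_one_optimal_sdp {n M : ℕ} (a : Fin n → ℂ)
    (B : Fin M → Matrix (Fin n) (Fin n) ℂ) (b : Fin M → ℝ)
    (hB : ∀ i, (B i).PosSemidef) (hb : ∀ i, 0 ≤ b i)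
    (feasible : Matrix (Fin n) (Fin n) ℂ → Prop)
    (hfeas : ∀ X, feasible X ↔ X.PosSemidef ∧ ∀ i, (Matrix.trace (B i * X)).re ≤ b i)
    (hopt : ∃ X, feasible X ∧ ∀ Y, feasible Y →
      (star a ⬝ᵥ (Y *ᵥ a)).re ≤ (star a ⬝ᵥ (X *ᵥ a)).re) :
    ∃ X, feasible X ∧ (∀ Y, feasible Y →
      (star a ⬝ᵥ (Y *ᵥ a)).re ≤ (star a ⬝ᵥ (X *ᵥ a)).re) ∧ X.rank ≤ 1 :=
  rank_one_optimal_sdp_general a B b hB feasible hfeas hopt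
end

section
/- Construction of a rank-one replacement preserving signal power, interference, and power budget: let S* ⪰ 0 be Hermitian, a, c₁,…,c_m ∈ ℂⁿ, and Q₁,…,Q_L ⪰ 0 Hermitian. Then there exists a rank ≤ 1 Hermitian matrix S** ⪰ 0 with aᴴ S** a ≥ aᴴ S* a, c_iᴴ S** c_i ≤ c_iᴴ S* c_i for all i, and tr(Q_l S**) ≤ tr(Q_l S*) for all l. -/
/-!
Put `v = S a` and `t = aᴴ S a ≥ 0`, and take `S** = v vᴴ / t`. Then `aᴴ S** a = t² / t = t`, and
`xᴴ S** x = |aᴴ S x|² / t ≤ xᴴ S x` is the Cauchy–Schwarz inequality for the semi-inner product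
`⟨x, y⟩ = xᴴ S y`, so `S - S** ⪰ 0`. Both `x ↦ xᴴ X x` and `X ↦ tr (Q X)` (for `Q ⪰ 0`) are monotone
in the Loewner order, the latter because `tr (Q D) = tr (B Q Bᴴ) ≥ 0` when `D = Bᴴ B`.
-/

open Matrix
open scoped ComplexOrder

namespace Matrix
variable {n 𝕜 : Type*} [Fintype n] [RCLike 𝕜]

theorem PosSemidef.norm_star_dotProduct_mulVec_sq_le {S : Matrix n n 𝕜} (hS : S.PosSemidef)
    (x y : n → 𝕜) :
    ‖star x ⬝ᵥ (S *ᵥ y)‖ ^ 2 ≤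
      RCLike.re (star x ⬝ᵥ (S *ᵥ x)) * RCLike.re (star y ⬝ᵥ (S *ᵥ y)) := by
  let := S.toSeminormedAddCommGroup hS
  let := S.toInnerProductSpace hS
  have h := inner_mul_inner_self_le (𝕜 := 𝕜) x y
  rw [norm_inner_symm y x, ← sq] at h
  rwa [dotProduct_comm (star x), dotProduct_comm (star x), dotProduct_comm (star y)]

theorem IsHermitian.ofReal_re_star_dotProduct_mulVec_self {S : Matrix n n 𝕜} (hS : S.IsHermitian)
    (x : n → 𝕜) : (RCLike.re (star x ⬝ᵥ (S *ᵥ x)) : 𝕜) = star x ⬝ᵥ (S *ᵥ x) :=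
  RCLike.ext (by simp) (by simp [hS.im_star_dotProduct_mulVec_self])

theorem IsHermitian.star_mulVec_dotProduct {S : Matrix n n 𝕜} (hS : S.IsHermitian)
    (a x : n → 𝕜) : star (S *ᵥ a) ⬝ᵥ x = star a ⬝ᵥ (S *ᵥ x) := by
  rw [star_mulVec, hS.eq, dotProduct_mulVec]

theorem star_dotProduct_vecMulVec_star_mulVec (v x : n → 𝕜) :
    star x ⬝ᵥ (vecMulVec v (star v) *ᵥ x) = (‖star v ⬝ᵥ x‖ ^ 2 : ℝ) := by
  rw [vecMulVec_mulVec, dotProduct_smul, star_dotProduct x v]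
  simp [RCLike.conj_mul]

/-- `S a aᴴ S / (aᴴ S a)`, which is `0` when `aᴴ S a = 0` (as `0⁻¹ = 0`). -/
noncomputable def rankOneAlong (S : Matrix n n 𝕜) (a : n → 𝕜) : Matrix n n 𝕜 :=
  (RCLike.re (star a ⬝ᵥ (S *ᵥ a)) : 𝕜)⁻¹ • vecMulVec (S *ᵥ a) (star (S *ᵥ a))

theorem rank_rankOneAlong_le (S : Matrix n n 𝕜) (a : n → 𝕜) : (rankOneAlong S a).rank ≤ 1 := by
  rw [rankOneAlong, ← smul_vecMulVec]
  exact rank_vecMulVec_le _ _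

theorem star_dotProduct_rankOneAlong_mulVec {S : Matrix n n 𝕜} (hS : S.IsHermitian)
    (a x : n → 𝕜) :
    star x ⬝ᵥ (rankOneAlong S a *ᵥ x) =
      ((RCLike.re (star a ⬝ᵥ (S *ᵥ a)))⁻¹ * ‖star a ⬝ᵥ (S *ᵥ x)‖ ^ 2 : ℝ) := by
  rw [rankOneAlong, smul_mulVec, dotProduct_smul, star_dotProduct_vecMulVec_star_mulVec,
    hS.star_mulVec_dotProduct]
  simp

theorem posSemidef_rankOneAlong {S : Matrix n n 𝕜} (hS : S.PosSemidef) (a : n → 𝕜) :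
    (rankOneAlong S a).PosSemidef :=
  (posSemidef_vecMulVec_self_star _).smul <| by
    simpa using hS.re_dotProduct_nonneg a

theorem re_star_dotProduct_rankOneAlong_mulVec_self {S : Matrix n n 𝕜} (hS : S.IsHermitian)
    (a : n → 𝕜) :
    RCLike.re (star a ⬝ᵥ (rankOneAlong S a *ᵥ a)) = RCLike.re (star a ⬝ᵥ (S *ᵥ a)) := by
  rw [star_dotProduct_rankOneAlong_mulVec hS, ← hS.ofReal_re_star_dotProduct_mulVec_self a]
  simp only [RCLike.ofReal_re, RCLike.norm_ofReal, sq_abs]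
  rw [sq, ← mul_assoc, inv_mul_mul_self]

theorem posSemidef_sub_rankOneAlong {S : Matrix n n 𝕜} (hS : S.PosSemidef) (a : n → 𝕜) :
    (S - rankOneAlong S a).PosSemidef := by
  refine .of_dotProduct_mulVec_nonneg (hS.1.sub (posSemidef_rankOneAlong hS a).1) fun x => ?_
  rw [sub_mulVec, dotProduct_sub, sub_nonneg, star_dotProduct_rankOneAlong_mulVec hS.1,
    ← hS.1.ofReal_re_star_dotProduct_mulVec_self x, RCLike.ofReal_le_ofReal]
  exact inv_mul_le_of_le_mul₀ (hS.re_dotProduct_nonneg a) (hS.re_dotProduct_nonneg x)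
    (hS.norm_star_dotProduct_mulVec_sq_le a x)

open scoped MatrixOrder in
theorem PosSemidef.trace_mul_nonneg_s8 {Q D : Matrix n n 𝕜} (hQ : Q.PosSemidef) (hD : D.PosSemidef) :
    0 ≤ (Q * D).trace := by
  classical
  obtain ⟨B, rfl⟩ := CStarAlgebra.nonneg_iff_eq_star_mul_self.mp hD.nonneg
  rw [← mul_assoc, trace_mul_cycle]
  exact (hQ.mul_mul_conjTranspose_same B).trace_nonneg

theorem PosSemidef.re_trace_mul_le {Q S T : Matrix n n 𝕜} (hQ : Q.PosSemidef)
    (hST : (S - T).PosSemidef) : RCLike.re (Q * T).trace ≤ RCLike.re (Q * S).trace := by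
  have h := RCLike.nonneg_iff.mp (hQ.trace_mul_nonneg_s8 hST) |>.1
  rwa [mul_sub, trace_sub, map_sub, sub_nonneg] at h

theorem PosSemidef.re_star_dotProduct_mulVec_le {S T : Matrix n n 𝕜}
    (hST : (S - T).PosSemidef) (x : n → 𝕜) :
    RCLike.re (star x ⬝ᵥ (T *ᵥ x)) ≤ RCLike.re (star x ⬝ᵥ (S *ᵥ x)) := by
  have h := hST.re_dotProduct_nonneg x
  rwa [sub_mulVec, dotProduct_sub, map_sub, sub_nonneg] at h

end Matrix

/-- Rank-one replacement preserving signal power, interference, and power budget: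
for PSD Hermitian `S*`, vectors `a, c₁,…,c_m`, and PSD Hermitian `Q₁,…,Q_L`, there is a
PSD Hermitian `S**` of rank ≤ 1 with `aᴴ S** a ≥ aᴴ S* a`, `c_iᴴ S** c_i ≤ c_iᴴ S* c_i`
for all `i`, and `tr(Q_l S**) ≤ tr(Q_l S*)` for all `l`. -/
theorem rank_one_replacement {n m L : ℕ}
    (Sstar : Matrix (Fin n) (Fin n) ℂ) (hS : Sstar.PosSemidef)
    (a : Fin n → ℂ) (c : Fin m → (Fin n → ℂ))
    (Q : Fin L → Matrix (Fin n) (Fin n) ℂ) (hQ : ∀ l, (Q l).PosSemidef) :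
    ∃ Sss : Matrix (Fin n) (Fin n) ℂ, Sss.PosSemidef ∧ Sss.rank ≤ 1 ∧
      (star a ⬝ᵥ (Sss *ᵥ a)).re ≥ (star a ⬝ᵥ (Sstar *ᵥ a)).re ∧
      (∀ i, (star (c i) ⬝ᵥ (Sss *ᵥ c i)).re ≤ (star (c i) ⬝ᵥ (Sstar *ᵥ c i)).re) ∧
      (∀ l, (Matrix.trace (Q l * Sss)).re ≤ (Matrix.trace (Q l * Sstar)).re) := by
  have hSub := posSemidef_sub_rankOneAlong hS a
  exact ⟨rankOneAlong Sstar a, posSemidef_rankOneAlong hS a, rank_rankOneAlong_le Sstar a,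
    (re_star_dotProduct_rankOneAlong_mulVec_self hS.1 a).ge,
    fun i => hSub.re_star_dotProduct_mulVec_le (c i),
    fun l => (hQ l).re_trace_mul_le hSub⟩
end
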